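/- arXiv:2002.11798 — 3 statements merged into one kernel-verified Lean document; each statement's English description precedes it below -/
import Mathlib

section
/- Let (𝒳, Δ) be the input metric space, 𝒴 a label set, μ_{XY} a joint distribution with marginal μ_X. For any classifier f : 𝒳 → 𝒴 and any ε ≥ 0, the adversarial risk AdvRisk_ε(f) = Pr_{(x,y)∼μ_{XY}}[∃ x' ∈ B(x,ε) with f(x') ≠ y] equals sup over μ_{X'} in the ∞-Wasserstein ball of radius ε around μ_X of Pr[f(X') ≠ Y], where (X', Y) is coupled so that X' = T(X) for the corresponding transport map T. -/
open Finset

attribute [local instance] Classical.propDecidable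

/-- Probability of an event under a probability mass function `μ` on a finite sample space. -/
noncomputable def pr {Ω : Type*} [Fintype Ω] (μ : Ω → ℝ) (E : Set Ω) : ℝ :=
  ∑ ω, if ω ∈ E then μ ω else 0

/-- Shannon entropy (natural log) of the random variable `X` under the pmf `μ`. -/
noncomputable def entropy {Ω α : Type*} [Fintype Ω] (μ : Ω → ℝ) (X : Ω → α) : ℝ :=
  -∑ a ∈ Finset.image X Finset.univ,
      pr μ {ω | X ω = a} * Real.log (pr μ {ω | X ω = a})

/-- Mutual information `I(X;Y) = H(X) + H(Y) - H(X,Y)` under the pmf `μ`. -/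
noncomputable def mutualInfo {Ω α β : Type*} [Fintype Ω] (μ : Ω → ℝ)
    (X : Ω → α) (Y : Ω → β) : ℝ :=
  entropy μ X + entropy μ Y - entropy μ (fun ω => (X ω, Y ω))

/-- `X → Y → Z` is a Markov chain: `X` and `Z` are conditionally independent given `Y`. -/
noncomputable def MarkovChain {Ω α β γ : Type*} [Fintype Ω] (μ : Ω → ℝ)
    (X : Ω → α) (Y : Ω → β) (Z : Ω → γ) : Prop :=
  ∀ (x : α) (y : β) (z : γ),
    pr μ {ω | X ω = x ∧ Y ω = y ∧ Z ω = z} * pr μ {ω | Y ω = y}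
      = pr μ {ω | X ω = x ∧ Y ω = y} * pr μ {ω | Y ω = y ∧ Z ω = z}

/-- **Lemma 3.3.** The adversarial risk of a classifier `f` equals the supremum, over all
distributions in the `∞`-Wasserstein ball of radius `ε` around `μ_X` (realized through
couplings `ν` of `(X, X', Y)` that transport `X` to `X'` within distance `ε` while keeping
the joint law of `(X, Y)`), of the misclassification probability `Pr[f(X') ≠ Y]`. -/
theorem advRisk_eq_sup_winf_ball {𝒳 𝒴 : Type*} [Fintype 𝒳] [Fintype 𝒴] [MetricSpace 𝒳]
    (μ : 𝒳 × 𝒴 → ℝ) (hnn : ∀ p, 0 ≤ μ p) (hsum : ∑ p, μ p = 1)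
    (f : 𝒳 → 𝒴) (ε : ℝ) (hε : 0 ≤ ε) :
    pr μ {p | ∃ x', dist x' p.1 ≤ ε ∧ f x' ≠ p.2}
      = sSup {r : ℝ | ∃ ν : 𝒳 × 𝒳 × 𝒴 → ℝ, (∀ t, 0 ≤ ν t) ∧
          (∀ (x : 𝒳) (y : 𝒴), ∑ x', ν (x, x', y) = μ (x, y)) ∧
          (∀ t, ν t ≠ 0 → dist t.1 t.2.1 ≤ ε) ∧
          r = pr ν {t | f t.2.1 ≠ t.2.2}} := by
  classical
  set E : Set (𝒳 × 𝒴) := {p | ∃ x', dist x' p.1 ≤ ε ∧ f x' ≠ p.2} with hE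
  set S : Set ℝ := {r : ℝ | ∃ ν : 𝒳 × 𝒳 × 𝒴 → ℝ, (∀ t, 0 ≤ ν t) ∧
          (∀ (x : 𝒳) (y : 𝒴), ∑ x', ν (x, x', y) = μ (x, y)) ∧
          (∀ t, ν t ≠ 0 → dist t.1 t.2.1 ≤ ε) ∧
          r = pr ν {t | f t.2.1 ≠ t.2.2}} with hS
  -- the adversarial transport map
  have hub : ∀ r ∈ S, r ≤ pr μ E := by
    rintro r ⟨ν, hν0, hmarg, hsupp, rfl⟩
    have step1 : pr ν {t : 𝒳 × 𝒳 × 𝒴 | f t.2.1 ≠ t.2.2}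
        ≤ ∑ t : 𝒳 × 𝒳 × 𝒴, if (t.1, t.2.2) ∈ E then ν t else 0 := by
      apply Finset.sum_le_sum
      intro t _
      by_cases h : f t.2.1 ≠ t.2.2
      · by_cases hz : ν t = 0
        · simp [hz]
        · have hd := hsupp t hz
          have : (t.1, t.2.2) ∈ E := ⟨t.2.1, by rw [dist_comm]; exact hd, h⟩
          simp [h, this]
      · simp [Set.mem_setOf_eq, h]
        split <;> [exact hν0 t; exact le_refl 0]
    have step2 : (∑ t : 𝒳 × 𝒳 × 𝒴, if (t.1, t.2.2) ∈ E then ν t else 0) = pr μ E := by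
      rw [pr, Fintype.sum_prod_type]
      rw [Fintype.sum_prod_type]
      simp only [Fintype.sum_prod_type]
      apply Finset.sum_congr rfl
      intro x _
      rw [Finset.sum_comm]
      apply Finset.sum_congr rfl
      intro y _
      by_cases h : (x, y) ∈ E
      · simp [h, hmarg x y]
      · simp [h]
    calc pr ν {t : 𝒳 × 𝒳 × 𝒴 | f t.2.1 ≠ t.2.2} ≤ _ := step1
      _ = pr μ E := step2
  have hmem : pr μ E ∈ S := by
    set g : 𝒳 × 𝒴 → 𝒳 := fun p =>
      if h : ∃ x', dist x' p.1 ≤ ε ∧ f x' ≠ p.2 then h.choose else p.1 with hg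
    refine ⟨fun t => if t.2.1 = g (t.1, t.2.2) then μ (t.1, t.2.2) else 0, ?_, ?_, ?_, ?_⟩
    · intro t; dsimp only; split <;> [exact hnn _; exact le_refl 0]
    · intro x y; simp
    · rintro ⟨x, x', y⟩ hne
      simp only at hne
      by_cases h : x' = g (x, y)
      · subst h
        by_cases hex : ∃ x'', dist x'' x ≤ ε ∧ f x'' ≠ y
        · simp only [hg, dif_pos hex]
          rw [dist_comm]; exact hex.choose_spec.1
        · simp only [hg, dif_neg hex]
          simp [hε]
      · simp [h] at hne
    · rw [pr, pr]
      rw [Fintype.sum_prod_type, Fintype.sum_prod_type]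
      simp only [Fintype.sum_prod_type]
      apply Finset.sum_congr rfl
      intro x _
      rw [Finset.sum_comm]
      apply Finset.sum_congr rfl
      intro y _
      have key : ((x, y) ∈ E) ↔ f (g (x, y)) ≠ y := by
        constructor
        · intro hex
          have hex' : ∃ x', dist x' x ≤ ε ∧ f x' ≠ y := hex
          simp only [hg, dif_pos hex']
          exact hex'.choose_spec.2
        · intro hne
          by_cases hex : ∃ x', dist x' x ≤ ε ∧ f x' ≠ y
          · exact hex
          · simp only [hg, dif_neg hex] at hne
            exact absurd ⟨x, by simp [hε], hne⟩ hex
      symm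
      simp only [Set.mem_setOf_eq]
      rw [show (∑ x' : 𝒳, if f x' ≠ y then (if x' = g (x, y) then μ (x, y) else 0) else 0)
          = ∑ x' : 𝒳, if x' = g (x, y) then (if f x' ≠ y then μ (x, y) else 0) else 0 by
        apply Finset.sum_congr rfl; intro x' _
        by_cases h1 : f x' ≠ y <;> by_cases h2 : x' = g (x, y) <;> simp [h1, h2]]
      rw [Finset.sum_ite_eq' Finset.univ (g (x, y))]
      simp only [Finset.mem_univ, if_true]
      by_cases h : (x, y) ∈ E
      · simp [h, key.mp h]
      · have : ¬ f (g (x, y)) ≠ y := fun hc => h (key.mpr hc)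
        simp [h, this]
  have hbdd : BddAbove S := ⟨pr μ E, hub⟩
  exact le_antisymm (le_csSup hbdd hmem) (csSup_le ⟨pr μ E, hmem⟩ hub)
end

section
/- Define the representation vulnerability RV_ε(g) = sup over μ_{X'} ∈ B_{W∞}(μ_X, ε) of [I(X; g(X)) - I(X'; g(X'))]. Then under the uniform-label assumption, inf over downstream classifiers h of AdvRisk_ε(h ∘ g) ≥ 1 - (I(X; g(X)) - RV_ε(g) + log 2) / log |𝒴|. -/
open Finset

attribute [local instance] Classical.propDecidable

/-- Mutual information `I(X; g(X))` where `X` is distributed according to the pmf `ν`. -/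
noncomputable def MI {𝒳 𝒵 : Type*} [Fintype 𝒳] (ν : 𝒳 → ℝ) (g : 𝒳 → 𝒵) : ℝ :=
  mutualInfo ν id g

/-- `ν'` lies in the `∞`-Wasserstein ball of radius `ε` around `ν`: there is a coupling of
`ν` and `ν'` supported on pairs at distance at most `ε`. -/
def InWinfBall {𝒳 : Type*} [Fintype 𝒳] [MetricSpace 𝒳] (ν ν' : 𝒳 → ℝ) (ε : ℝ) : Prop :=
  ∃ γ : 𝒳 × 𝒳 → ℝ, (∀ p, 0 ≤ γ p) ∧ (∀ x, ∑ x', γ (x, x') = ν x) ∧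
    (∀ x', ∑ x, γ (x, x') = ν' x') ∧ (∀ p, γ p ≠ 0 → dist p.1 p.2 ≤ ε)

/-- Representation vulnerability:
`RV_ε(g) = sup_{ν' ∈ B_{W∞}(ν, ε)} [I(X; g(X)) - I(X'; g(X'))]`. -/
noncomputable def RV {𝒳 𝒵 : Type*} [Fintype 𝒳] [MetricSpace 𝒳]
    (ν : 𝒳 → ℝ) (ε : ℝ) (g : 𝒳 → 𝒵) : ℝ :=
  sSup {r : ℝ | ∃ ν' : 𝒳 → ℝ, (∀ x, 0 ≤ ν' x) ∧ (∑ x, ν' x = 1) ∧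
    InWinfBall ν ν' ε ∧ r = MI ν g - MI ν' g}

/-!
Fix `ν'` in the `W∞` ball around the input law `ν` with coupling `γ`, and let `(X, X') ~ γ` with
the label `Y` drawn from `μ(· | X)`. Then `(X', Y)` still has uniform label marginal, and
whenever `h (g X') ≠ Y` the point `(X, Y)` is an `ε`-adversarial error, so
`1 - AdvRisk_ε(h ∘ g) ≤ P(h (g X') = Y)`. Fano's inequality for a uniform label bounds the latter
by `(log 2 + H(h (g X'))) / log |𝒴|`, and `H(h (g X')) ≤ H(g X') = I(X'; g X')`. Hence
`I(X; g X) - I(X'; g X') ≤ I(X; g X) + log 2 - (1 - AdvRisk_ε) log |𝒴|` for every such `ν'`,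
and taking the supremum over the ball, which contains `ν`, gives the bound.
-/

open Real

section Probability

variable {Ω : Type*} [Fintype Ω]

lemma pr_nonneg {μ : Ω → ℝ} (hμ : ∀ ω, 0 ≤ μ ω) (E : Set Ω) : 0 ≤ pr μ E :=
  Finset.sum_nonneg fun ω _ => by split_ifs <;> simp [hμ ω]

lemma pr_add_pr_compl (μ : Ω → ℝ) (E : Set Ω) : pr μ E + pr μ Eᶜ = ∑ ω, μ ω := by
  rw [pr, pr, ← Finset.sum_add_distrib]
  refine Finset.sum_congr rfl fun ω _ => ?_
  by_cases h : ω ∈ E <;> simp [h]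

lemma pr_le_sum {μ : Ω → ℝ} (hμ : ∀ ω, 0 ≤ μ ω) (E : Set Ω) : pr μ E ≤ ∑ ω, μ ω := by
  linarith [pr_add_pr_compl μ E, pr_nonneg hμ Eᶜ]

lemma sum_pr_fiber {α : Type*} [Fintype α] (μ : Ω → ℝ) (X : Ω → α) :
    ∑ a, pr μ {ω | X ω = a} = ∑ ω, μ ω := by
  simp [pr, Finset.sum_comm (γ := α)]

lemma pr_comp_eq_sum_fiber {α β : Type*} (μ : Ω → ℝ) (X : Ω → α) (f : α → β) (b : β) :
    pr μ {ω | f (X ω) = b} = ∑ a ∈ Finset.univ.image X with f a = b, pr μ {ω | X ω = a} := by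
  simp only [pr, Set.mem_ofPred_eq]
  rw [Finset.sum_comm]
  refine Finset.sum_congr rfl fun ω _ => ?_
  rw [Finset.sum_ite_eq]
  simp

lemma entropy_eq_sum_negMulLog {α : Type*} (μ : Ω → ℝ) (X : Ω → α) :
    entropy μ X = ∑ a ∈ Finset.univ.image X, negMulLog (pr μ {ω | X ω = a}) := by
  simp only [entropy, negMulLog, neg_mul, Finset.sum_neg_distrib]

lemma entropy_eq_sum_univ {α : Type*} [Fintype α] (μ : Ω → ℝ) (X : Ω → α) :
    entropy μ X = ∑ a, negMulLog (pr μ {ω | X ω = a}) := by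
  rw [entropy_eq_sum_negMulLog]
  refine Finset.sum_subset (Finset.subset_univ _) fun a _ ha => ?_
  simp only [Finset.mem_image, Finset.mem_univ, true_and, not_exists] at ha
  simp [pr, ha]

lemma entropy_of_injective {α : Type*} (μ : Ω → ℝ) {X : Ω → α} (hX : X.Injective) :
    entropy μ X = ∑ ω, negMulLog (μ ω) := by
  rw [entropy_eq_sum_negMulLog, Finset.sum_image fun _ _ _ _ h => hX h]
  refine Finset.sum_congr rfl fun ω _ => ?_
  simp [pr, hX.eq_iff]

lemma negMulLog_sum_le {ι : Type*} (s : Finset ι) {q : ι → ℝ} (hq : ∀ i ∈ s, 0 ≤ q i) :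
    negMulLog (∑ i ∈ s, q i) ≤ ∑ i ∈ s, negMulLog (q i) := by
  rw [negMulLog, neg_mul, Finset.sum_mul, ← Finset.sum_neg_distrib]
  refine Finset.sum_le_sum fun i hi => ?_
  rcases (hq i hi).eq_or_lt with h0 | hpos
  · simp [← h0]
  · have := Real.log_le_log hpos (Finset.single_le_sum hq hi)
    rw [negMulLog]
    nlinarith

lemma entropy_comp_le {α β : Type*} {μ : Ω → ℝ} (hμ : ∀ ω, 0 ≤ μ ω) (X : Ω → α) (f : α → β) :
    entropy μ (fun ω => f (X ω)) ≤ entropy μ X := by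
  rw [entropy_eq_sum_negMulLog, entropy_eq_sum_negMulLog]
  calc ∑ b ∈ Finset.univ.image (fun ω => f (X ω)), negMulLog (pr μ {ω | f (X ω) = b})
      ≤ ∑ b ∈ Finset.univ.image (fun ω => f (X ω)),
          ∑ a ∈ Finset.univ.image X with f a = b, negMulLog (pr μ {ω | X ω = a}) := by
        refine Finset.sum_le_sum fun b _ => ?_
        rw [pr_comp_eq_sum_fiber]
        exact negMulLog_sum_le _ fun a _ => pr_nonneg hμ _
    _ = ∑ a ∈ Finset.univ.image X, negMulLog (pr μ {ω | X ω = a}) := by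
        refine Finset.sum_fiberwise_of_maps_to (fun a ha => ?_) _
        obtain ⟨ω, -, rfl⟩ := Finset.mem_image.mp ha
        exact Finset.mem_image_of_mem _ (Finset.mem_univ ω)

end Probability

lemma MI_eq_entropy {𝒳 𝒵 : Type*} [Fintype 𝒳] (ν : 𝒳 → ℝ) (g : 𝒳 → 𝒵) :
    MI ν g = entropy ν g := by
  have hpair : entropy ν (fun x => (id x, g x)) = entropy ν id :=
    (entropy_of_injective ν fun _ _ h => (Prod.ext_iff.mp h).1).trans
      (entropy_of_injective ν Function.injective_id).symm
  rw [MI, mutualInfo, hpair]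
  ring

lemma sum_mul_div_sum_self {ι : Type*} (s : Finset ι) (a : ι → ℝ) {c : ℝ}
    (hc : ∑ i ∈ s, a i = 0 → c = 0) : ∑ i ∈ s, a i * c / ∑ j ∈ s, a j = c := by
  rw [← Finset.sum_div, ← Finset.sum_mul]
  rcases eq_or_ne (∑ i ∈ s, a i) 0 with h | h
  · simp [h, hc h]
  · exact mul_div_cancel_left₀ c h

section Transport

variable {𝒳 𝒴 : Type*} [Fintype 𝒳] [Fintype 𝒴]

/-- The law of `(X', Y)` when `(X, X') ~ γ` and `Y` is drawn from `μ(· | X)`. Where `X` has no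
mass the division is by zero, which is harmless as the corresponding row of `γ` vanishes. -/
noncomputable def transport (γ : 𝒳 × 𝒳 → ℝ) (μ : 𝒳 × 𝒴 → ℝ) : 𝒳 × 𝒴 → ℝ :=
  fun p => ∑ x, γ (x, p.1) * μ (x, p.2) / ∑ y, μ (x, y)

variable {γ : 𝒳 × 𝒳 → ℝ} {μ : 𝒳 × 𝒴 → ℝ}

lemma transport_nonneg (hγ : ∀ p, 0 ≤ γ p) (hμ : ∀ p, 0 ≤ μ p) (p : 𝒳 × 𝒴) :
    0 ≤ transport γ μ p :=
  Finset.sum_nonneg fun x _ =>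
    div_nonneg (mul_nonneg (hγ _) (hμ _)) (Finset.sum_nonneg fun y _ => hμ (x, y))

lemma sum_coupling_mul_div_marginal (hμ : ∀ p, 0 ≤ μ p) (hγμ : ∀ x, ∑ x', γ (x, x') = ∑ y, μ (x, y))
    (x : 𝒳) (y : 𝒴) : ∑ x', γ (x, x') * μ (x, y) / ∑ y, μ (x, y) = μ (x, y) := by
  rw [← hγμ x]
  refine sum_mul_div_sum_self _ _ fun h0 => ?_
  rw [hγμ x] at h0
  exact (Finset.sum_eq_zero_iff_of_nonneg fun y _ => hμ (x, y)).mp h0 y (Finset.mem_univ y)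

lemma sum_label_mul_div_marginal (hγ : ∀ p, 0 ≤ γ p) (hγμ : ∀ x, ∑ x', γ (x, x') = ∑ y, μ (x, y))
    (x x' : 𝒳) : ∑ y, γ (x, x') * μ (x, y) / ∑ y, μ (x, y) = γ (x, x') := by
  simp_rw [mul_comm (γ (x, x'))]
  refine sum_mul_div_sum_self _ _ fun h0 => ?_
  rw [← hγμ x] at h0
  exact (Finset.sum_eq_zero_iff_of_nonneg fun x' _ => hγ (x, x')).mp h0 x' (Finset.mem_univ x')

lemma sum_transport_fst (hγ : ∀ p, 0 ≤ γ p) (hγμ : ∀ x, ∑ x', γ (x, x') = ∑ y, μ (x, y))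
    (x' : 𝒳) : ∑ y, transport γ μ (x', y) = ∑ x, γ (x, x') := by
  simp only [transport]
  rw [Finset.sum_comm]
  exact Finset.sum_congr rfl fun x _ => sum_label_mul_div_marginal hγ hγμ x x'

lemma sum_transport_snd (hμ : ∀ p, 0 ≤ μ p) (hγμ : ∀ x, ∑ x', γ (x, x') = ∑ y, μ (x, y))
    (y : 𝒴) : ∑ x', transport γ μ (x', y) = ∑ x, μ (x, y) := by
  simp only [transport]
  rw [Finset.sum_comm]
  exact Finset.sum_congr rfl fun x _ => sum_coupling_mul_div_marginal hμ hγμ x y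

lemma pr_transport_le [PseudoMetricSpace 𝒳] {ε : ℝ} (hγ : ∀ p, 0 ≤ γ p) (hμ : ∀ p, 0 ≤ μ p)
    (hγμ : ∀ x, ∑ x', γ (x, x') = ∑ y, μ (x, y)) (hγε : ∀ p, γ p ≠ 0 → dist p.1 p.2 ≤ ε)
    (E : Set (𝒳 × 𝒴)) :
    pr (transport γ μ) E ≤ pr μ {p | ∃ x', dist x' p.1 ≤ ε ∧ (x', p.2) ∈ E} := by
  set w : 𝒳 → 𝒳 → 𝒴 → ℝ := fun x x' y => γ (x, x') * μ (x, y) / ∑ y, μ (x, y)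
  have hw : ∀ x x' y, 0 ≤ w x x' y := fun x x' y =>
    div_nonneg (mul_nonneg (hγ _) (hμ _)) (Finset.sum_nonneg fun y _ => hμ (x, y))
  have hpr : pr (transport γ μ) E = ∑ x, ∑ y, ∑ x', if (x', y) ∈ E then w x x' y else 0 := by
    simp only [pr, transport, Finset.ite_sum_zero, Fintype.sum_prod_type]
    rw [Finset.sum_comm]
    exact (Finset.sum_congr rfl fun y _ => Finset.sum_comm).trans Finset.sum_comm
  rw [hpr, pr, Fintype.sum_prod_type]
  refine Finset.sum_le_sum fun x _ => Finset.sum_le_sum fun y _ => ?_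
  split_ifs with hE
  · calc ∑ x', (if (x', y) ∈ E then w x x' y else 0) ≤ ∑ x', w x x' y :=
          Finset.sum_le_sum fun x' _ => by split_ifs <;> simp [hw x x' y]
      _ = μ (x, y) := sum_coupling_mul_div_marginal hμ hγμ x y
  · refine (Finset.sum_eq_zero fun x' _ => ?_).le
    split_ifs with hx'
    · by_cases h0 : γ (x, x') = 0
      · simp [w, h0]
      · exact absurd ⟨x', by simpa [dist_comm] using hγε _ h0, hx'⟩ hE
    · rfl

end Transport

lemma log_le_mul_log_two {K : ℝ} (hK : 2 ≤ K) : log K ≤ K * log 2 := by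
  have h₁ : log (K / 2) ≤ K / 2 - 1 := log_le_sub_one_of_pos (by linarith)
  have h₂ : log (K / 2) = log K - log 2 := log_div (by linarith) two_ne_zero
  nlinarith [log_two_gt_d9]

/-- The per-label concavity estimate behind Fano's inequality for a uniform label. -/
lemma min_inv_mul_log_le {K p : ℝ} (hK : 2 ≤ K) (hp₀ : 0 ≤ p) (hp₁ : p ≤ 1) :
    min p K⁻¹ * log K ≤ p * log 2 + negMulLog p := by
  have hK₀ : 0 < K := by linarith
  have hlog2 : 0 < log 2 := log_pos one_lt_two
  rcases le_or_gt p K⁻¹ with hle | hlt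
  · rw [min_eq_left hle]
    rcases hp₀.eq_or_lt with rfl | hpos
    · simp
    have hKp : log (K * p) ≤ 0 :=
      log_nonpos (by positivity) (by simpa [hK₀.ne'] using mul_le_mul_of_nonneg_left hle hK₀.le)
    rw [log_mul hK₀.ne' hpos.ne'] at hKp
    rw [negMulLog]
    nlinarith
  · rw [min_eq_right hlt.le]
    have hconc : ConcaveOn ℝ (Set.Ici 0) fun t => t * log 2 + negMulLog t :=
      ((concaveOn_id (convex_Ici 0)).smul hlog2.le).add concaveOn_negMulLog |>.congr
        fun t _ => by simp [mul_comm]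
    have hmin := hconc.min_le_of_mem_Icc (x := K⁻¹) (y := 1) (by simp [hK₀.le]) (by simp)
      ⟨hlt.le, hp₁⟩
    have hleft : K⁻¹ * log K ≤ K⁻¹ * log 2 + negMulLog K⁻¹ := by
      rw [negMulLog, log_inv]
      nlinarith [inv_pos.mpr hK₀]
    have hright : K⁻¹ * log K ≤ 1 * log 2 + negMulLog 1 := by
      rw [negMulLog_one, add_zero, one_mul, inv_mul_le_iff₀ hK₀]
      exact log_le_mul_log_two hK
    exact (le_min hleft hright).trans hmin

section Fano

variable {α 𝒴 : Type*} [Fintype α] [Fintype 𝒴]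

lemma pr_eq_le_sum_min {ρ : α × 𝒴 → ℝ} {ν : α → ℝ} (hρ : ∀ p, 0 ≤ ρ p)
    (hν : ∀ a, ∑ y, ρ (a, y) = ν a) (f : α → 𝒴) :
    pr ρ {p | f p.1 = p.2} ≤ ∑ y, min (pr ν {a | f a = y}) (∑ a, ρ (a, y)) := by
  have hsplit : pr ρ {p | f p.1 = p.2} = ∑ y, ∑ a, if f a = y then ρ (a, y) else 0 := by
    rw [pr, Fintype.sum_prod_type, Finset.sum_comm]
    rfl
  rw [hsplit]
  refine Finset.sum_le_sum fun y _ => le_min ?_ ?_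
  · refine Finset.sum_le_sum fun a _ => ?_
    by_cases hfa : f a = y
    · simpa [hfa, ← hν a] using Finset.single_le_sum (fun y _ => hρ (a, y)) (Finset.mem_univ y)
    · simp [hfa]
  · exact Finset.sum_le_sum fun a _ => by split_ifs <;> simp [hρ (a, y)]

/-- Fano's inequality for a uniformly distributed label. -/
theorem pr_eq_mul_log_card_le {ρ : α × 𝒴 → ℝ} {ν : α → ℝ} (hρ : ∀ p, 0 ≤ ρ p)
    (hν : ∀ a, ∑ y, ρ (a, y) = ν a) (hν₁ : ∑ a, ν a = 1) (hcard : 2 ≤ Fintype.card 𝒴)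
    (hunif : ∀ y, ∑ a, ρ (a, y) = 1 / Fintype.card 𝒴) (f : α → 𝒴) :
    pr ρ {p | f p.1 = p.2} * log (Fintype.card 𝒴) ≤ log 2 + entropy ν f := by
  have hK : (2 : ℝ) ≤ Fintype.card 𝒴 := by exact_mod_cast hcard
  set K : ℝ := (Fintype.card 𝒴 : ℝ)
  have hν₀ : ∀ a, 0 ≤ ν a := fun a => hν a ▸ Finset.sum_nonneg fun y _ => hρ (a, y)
  calc pr ρ {p | f p.1 = p.2} * log K
      ≤ (∑ y, min (pr ν {a | f a = y}) K⁻¹) * log K := by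
        refine mul_le_mul_of_nonneg_right ?_ (log_nonneg (by linarith))
        simpa only [hunif, one_div] using pr_eq_le_sum_min hρ hν f
    _ ≤ ∑ y, (pr ν {a | f a = y} * log 2 + negMulLog (pr ν {a | f a = y})) := by
        rw [Finset.sum_mul]
        exact Finset.sum_le_sum fun y _ => min_inv_mul_log_le hK (pr_nonneg hν₀ _)
          (hν₁ ▸ pr_le_sum hν₀ _)
    _ = log 2 + entropy ν f := by
        rw [Finset.sum_add_distrib, ← Finset.sum_mul, sum_pr_fiber, hν₁, one_mul,
          entropy_eq_sum_univ]

end Fano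

lemma inWinfBall_self {𝒳 : Type*} [Fintype 𝒳] [MetricSpace 𝒳] {ν : 𝒳 → ℝ} (hν : ∀ x, 0 ≤ ν x)
    {ε : ℝ} (hε : 0 ≤ ε) : InWinfBall ν ν ε := by
  refine ⟨fun p => if p.1 = p.2 then ν p.1 else 0, fun p => ?_, fun x => ?_, fun x' => ?_,
    fun p hp => ?_⟩
  · dsimp only
    split_ifs <;> simp [hν]
  · simp
  · simp [Finset.sum_ite_eq']
  · have hdiag : p.1 = p.2 := by
      by_contra hne
      simp [hne] at hp
    simp [hdiag, hε]

theorem mul_log_card_le_MI_add_log_two {𝒳 𝒴 𝒵 : Type*} [Fintype 𝒳] [Fintype 𝒴]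
    [MetricSpace 𝒳] {μ : 𝒳 × 𝒴 → ℝ} (hμ : ∀ p, 0 ≤ μ p) (hcard : 2 ≤ Fintype.card 𝒴)
    (hunif : ∀ y : 𝒴, ∑ x, μ (x, y) = 1 / Fintype.card 𝒴) (g : 𝒳 → 𝒵) (h : 𝒵 → 𝒴) {ε : ℝ}
    {ν' : 𝒳 → ℝ} (hν'₁ : ∑ x, ν' x = 1) (hball : InWinfBall (fun x => ∑ y, μ (x, y)) ν' ε) :
    (1 - pr μ {p | ∃ x', dist x' p.1 ≤ ε ∧ h (g x') ≠ p.2}) * log (Fintype.card 𝒴)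
      ≤ MI ν' g + log 2 := by
  obtain ⟨γ, hγ, hγμ, hγν', hγε⟩ := hball
  set ρ := transport γ μ
  have hρ : ∀ p, 0 ≤ ρ p := transport_nonneg hγ hμ
  have hρν' : ∀ x', ∑ y, ρ (x', y) = ν' x' := fun x' =>
    (sum_transport_fst hγ hγμ x').trans (hγν' x')
  have hν'₀ : ∀ x', 0 ≤ ν' x' := fun x' => hρν' x' ▸ Finset.sum_nonneg fun y _ => hρ _
  have hρ₁ : ∑ p, ρ p = 1 := by
    rw [Fintype.sum_prod_type, Finset.sum_congr rfl fun x' _ => hρν' x', hν'₁]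
  have hwrong : pr ρ {p | h (g p.1) = p.2}ᶜ
      ≤ pr μ {p | ∃ x', dist x' p.1 ≤ ε ∧ h (g x') ≠ p.2} :=
    pr_transport_le hγ hμ hγμ hγε _
  have hsplit := pr_add_pr_compl ρ {p | h (g p.1) = p.2}
  have hfano := pr_eq_mul_log_card_le hρ hρν' hν'₁ hcard
    (fun y => (sum_transport_snd hμ hγμ y).trans (hunif y)) fun x => h (g x)
  have hlog : 0 ≤ log (Fintype.card 𝒴) := log_nonneg (by exact_mod_cast hcard.trans' one_le_two)
  calc (1 - pr μ {p | ∃ x', dist x' p.1 ≤ ε ∧ h (g x') ≠ p.2}) * log (Fintype.card 𝒴)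
      ≤ pr ρ {p | h (g p.1) = p.2} * log (Fintype.card 𝒴) :=
        mul_le_mul_of_nonneg_right (by linarith) hlog
    _ ≤ log 2 + entropy ν' fun x => h (g x) := hfano
    _ ≤ MI ν' g + log 2 := by
        rw [MI_eq_entropy]
        linarith [entropy_comp_le hν'₀ g h]

/-- **Theorem 3.4 (lower bound on adversarial risk).** If the label marginal is uniform
over a finite label set `𝒴`, then for every downstream classifier `h`,
`AdvRisk_ε(h ∘ g) ≥ 1 - (I(X; g(X)) - RV_ε(g) + log 2) / log |𝒴|`; in particular the
infimum over `h` satisfies this bound. -/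
theorem advRisk_lower_bound {𝒳 𝒴 𝒵 : Type*} [Fintype 𝒳] [Fintype 𝒴] [MetricSpace 𝒳]
    (μ : 𝒳 × 𝒴 → ℝ) (hnn : ∀ p, 0 ≤ μ p) (hsum : ∑ p, μ p = 1)
    (hcard : 2 ≤ Fintype.card 𝒴)
    (hunif : ∀ y : 𝒴, ∑ x, μ (x, y) = 1 / Fintype.card 𝒴)
    (g : 𝒳 → 𝒵) (ε : ℝ) (hε : 0 ≤ ε) :
    ∀ h : 𝒵 → 𝒴,
      1 - (MI (fun x => ∑ y, μ (x, y)) g - RV (fun x => ∑ y, μ (x, y)) ε g + Real.log 2)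
            / Real.log (Fintype.card 𝒴)
        ≤ pr μ {p | ∃ x', dist x' p.1 ≤ ε ∧ h (g x') ≠ p.2} := by
  intro h
  set ν : 𝒳 → ℝ := fun x => ∑ y, μ (x, y)
  set adv := pr μ {p | ∃ x', dist x' p.1 ≤ ε ∧ h (g x') ≠ p.2}
  have hν₀ : ∀ x, 0 ≤ ν x := fun x => Finset.sum_nonneg fun y _ => hnn (x, y)
  have hν₁ : ∑ x, ν x = 1 := by rw [← hsum, Fintype.sum_prod_type]
  have hRV : RV ν ε g ≤ MI ν g + log 2 - (1 - adv) * log (Fintype.card 𝒴) := by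
    refine csSup_le ⟨0, ν, hν₀, hν₁, inWinfBall_self hν₀ hε, (sub_self _).symm⟩ ?_
    rintro _ ⟨ν', -, hν'₁, hball, rfl⟩
    linarith [mul_log_card_le_MI_add_log_two hnn hcard hunif g h hν'₁ hball]
  have hlog : 0 < log (Fintype.card 𝒴) := log_pos (by exact_mod_cast hcard)
  rw [sub_le_comm, le_div_iff₀ hlog]
  linarith
end

section
/- For the Gaussian mixture model with ℓ_p-bounded adversary (1/p + 1/q = 1), the classifier f(x) = sgn(w^⊤x) has adversarial risk AdvRisk_ε(f) = Pr_{Z∼N(0,1)}[Z ≤ (ε‖w‖_q - w^⊤θ*)/√(w^⊤Σ*w)]. -/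
open Finset MeasureTheory ProbabilityTheory
open scoped ENNReal

/-- Dot product on `ℝᵈ`. -/
noncomputable def dotp {d : ℕ} (a b : Fin d → ℝ) : ℝ := ∑ i, a i * b i

/-- The `ℓ_p` norm on `ℝᵈ`. -/
noncomputable def lpnorm {d : ℕ} (p : ℝ) (a : Fin d → ℝ) : ℝ :=
  (∑ i, |a i| ^ p) ^ (1 / p)

/-- The sign function: `sg r = 1` if `r ≥ 0`, `-1` otherwise. -/
noncomputable def sg (r : ℝ) : ℝ := if 0 ≤ r then 1 else -1

/-- `ν` is the multivariate Gaussian `N(θ, S)`, characterized by all its one-dimensional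
projections: for every `w`, `wᵀX ∼ N(wᵀθ, wᵀSw)`. -/
def IsGaussianVec {d : ℕ} (θ : Fin d → ℝ) (S : Matrix (Fin d) (Fin d) ℝ)
    (ν : Measure (Fin d → ℝ)) : Prop :=
  ∀ w : Fin d → ℝ,
    ν.map (fun x => dotp w x)
      = gaussianReal (dotp w θ) (Real.toNNReal (dotp w (S.mulVec w)))

/-- The Gaussian mixture model: `y ∼ Unif{-1,+1}`, `x | y ∼ N(y θ, S)`; the joint law of
`(x, y)` on `ℝᵈ × ℝ`. -/
noncomputable def mixture {d : ℕ} (νpos νneg : Measure (Fin d → ℝ)) :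
    Measure ((Fin d → ℝ) × ℝ) :=
  (2 : ℝ≥0∞)⁻¹ • (νpos.map (fun x => (x, (1 : ℝ))))
    + (2 : ℝ≥0∞)⁻¹ • (νneg.map (fun x => (x, (-1 : ℝ))))

/-!
By Hölder's inequality and its equality case, the values of `wᵀx'` over the `ℓ_p` ball of
radius `ε` around `x` fill `[wᵀx - ε‖w‖_q, wᵀx + ε‖w‖_q]`. Hence `(x, +1)` is attacked iff
`wᵀx < ε‖w‖_q` and `(x, -1)` iff `-ε‖w‖_q ≤ wᵀx`. Given the label, `wᵀx` is Gaussian with mean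
`±wᵀθ` and variance `wᵀΣw`, so by symmetry both events have probability
`Φ((ε‖w‖_q - wᵀθ) / √(wᵀΣw))`, and so does their average.
-/

open Set

lemma dotp_eq_dotProduct {d : ℕ} (a b : Fin d → ℝ) : dotp a b = a ⬝ᵥ b := rfl

lemma measurable_dotp {d : ℕ} (w : Fin d → ℝ) : Measurable (dotp w) := by
  unfold dotp
  fun_prop

lemma lpnorm_smul {d : ℕ} {p : ℝ} (hp : p ≠ 0) (c : ℝ) (a : Fin d → ℝ) :
    lpnorm p (c • a) = |c| * lpnorm p a := by
  have hterm (i : Fin d) : |(c • a) i| ^ p = |c| ^ p * |a i| ^ p := by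
    rw [Pi.smul_apply, smul_eq_mul, abs_mul, Real.mul_rpow (abs_nonneg _) (abs_nonneg _)]
  rw [lpnorm, lpnorm, Finset.sum_congr rfl fun i _ => hterm i, ← Finset.mul_sum,
    Real.mul_rpow (by positivity) (by positivity), one_div, Real.rpow_rpow_inv (abs_nonneg _) hp]

lemma lpnorm_nonneg {d : ℕ} (p : ℝ) (a : Fin d → ℝ) : 0 ≤ lpnorm p a := by
  unfold lpnorm
  positivity

lemma sg_ne_one_iff (r : ℝ) : sg r ≠ 1 ↔ r < 0 := by
  unfold sg
  split_ifs with h <;> grind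

lemma sg_ne_neg_one_iff (r : ℝ) : sg r ≠ -1 ↔ 0 ≤ r := by
  unfold sg
  split_ifs with h <;> grind

section Holder

variable {d : ℕ} {p q : ℝ}

lemma abs_dotp_le_lpnorm_mul_lpnorm (hpq : p.HolderConjugate q) (w u : Fin d → ℝ) :
    |dotp w u| ≤ lpnorm q w * lpnorm p u :=
  calc |dotp w u| ≤ ∑ i, |w i| * |u i| := by
        simpa only [dotp, abs_mul] using Finset.abs_sum_le_sum_abs (fun i => w i * u i) univ
    _ ≤ lpnorm q w * lpnorm p u := by
        simpa only [lpnorm, abs_abs] using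
          Real.inner_le_Lp_mul_Lq univ (fun i => |w i|) (fun i => |u i|) hpq.symm

/-- The witness is `(w i * |w i| ^ (q - 2))ᵢ`, rescaled to unit `ℓ_p` norm. -/
lemma exists_lpnorm_le_one_and_dotp_eq (hpq : p.HolderConjugate q) (w : Fin d → ℝ) :
    ∃ u, lpnorm p u ≤ 1 ∧ dotp w u = lpnorm q w := by
  set N := ∑ i, |w i| ^ q
  set v : Fin d → ℝ := fun i => w i * |w i| ^ (q - 2)
  have hq : 1 < q := hpq.symm.lt
  have hN : 0 ≤ N := Finset.sum_nonneg fun i _ => by positivity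
  -- `Real.rpow_add'` only needs a nonzero total exponent, so `w i = 0` needs no separate case
  have habs_v (i : Fin d) : |v i| = |w i| ^ (q - 1) := by
    rw [abs_mul, abs_of_nonneg (by positivity : (0 : ℝ) ≤ |w i| ^ (q - 2)),
      ← Real.rpow_one_add' (abs_nonneg _) (by linarith)]
    ring_nf
  have hwv (i : Fin d) : w i * v i = |w i| ^ q := by
    rw [← mul_assoc, ← sq, ← sq_abs, ← Real.rpow_two,
      ← Real.rpow_add' (abs_nonneg _) (by linarith)]
    ring_nf
  have hlpnorm_v : lpnorm p v = N ^ (1 / p) := by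
    rw [lpnorm]
    congr 1
    refine Finset.sum_congr rfl fun i _ => ?_
    rw [habs_v, ← Real.rpow_mul (abs_nonneg _), hpq.symm.sub_one_mul_conj]
  refine ⟨(N ^ (1 / p))⁻¹ • v, ?_, ?_⟩
  · rw [lpnorm_smul hpq.ne_zero, hlpnorm_v, abs_of_nonneg (by positivity), inv_mul_eq_div]
    exact div_self_le_one _
  · have h_exp : 1 / q = 1 - 1 / p := by
      rw [eq_sub_iff_add_eq, one_div, one_div, add_comm]
      exact hpq.inv_add_inv_eq_one
    rw [dotp_eq_dotProduct, dotProduct_smul, ← dotp_eq_dotProduct, smul_eq_mul, lpnorm,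
      h_exp, Real.rpow_sub' hN (by rw [← h_exp]; exact one_div_ne_zero hpq.symm.ne_zero),
      Real.rpow_one, inv_mul_eq_div]
    congr 1
    exact Finset.sum_congr rfl fun i _ => hwv i

end Holder

def adversarialSet {d : ℕ} (p ε : ℝ) (w : Fin d → ℝ) : Set ((Fin d → ℝ) × ℝ) :=
  {t | ∃ x', lpnorm p (fun i => x' i - t.1 i) ≤ ε ∧ sg (dotp w x') ≠ t.2}

section Adversary

variable {d : ℕ} {p q ε : ℝ}

lemma abs_dotp_sub_le_of_lpnorm_sub_le (hpq : p.HolderConjugate q) (w : Fin d → ℝ)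
    {x x' : Fin d → ℝ} (h : lpnorm p (x' - x) ≤ ε) :
    |dotp w x' - dotp w x| ≤ ε * lpnorm q w := by
  rw [dotp_eq_dotProduct, dotp_eq_dotProduct, ← dotProduct_sub, ← dotp_eq_dotProduct, mul_comm]
  exact (abs_dotp_le_lpnorm_mul_lpnorm hpq w _).trans (by gcongr; exact lpnorm_nonneg q w)

lemma exists_lpnorm_sub_le_and_dotp_eq (hpq : p.HolderConjugate q) (w x : Fin d → ℝ) {t : ℝ}
    (ht : |t| ≤ ε) :
    ∃ x', lpnorm p (x' - x) ≤ ε ∧ dotp w x' = dotp w x + t * lpnorm q w := by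
  obtain ⟨u, hu, hwu⟩ := exists_lpnorm_le_one_and_dotp_eq hpq w
  refine ⟨x + t • u, ?_, ?_⟩
  · rw [add_sub_cancel_left, lpnorm_smul hpq.ne_zero]
    nlinarith [abs_nonneg t]
  · simp only [dotp_eq_dotProduct, dotProduct_add, dotProduct_smul, smul_eq_mul] at hwu ⊢
    rw [hwu]

lemma exists_lpnorm_sub_le_and_dotp_neg_iff (hpq : p.HolderConjugate q) (hε : 0 ≤ ε)
    (w x : Fin d → ℝ) :
    (∃ x', lpnorm p (x' - x) ≤ ε ∧ dotp w x' < 0) ↔ dotp w x < ε * lpnorm q w := by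
  constructor
  · rintro ⟨x', hx', hneg⟩
    linarith [abs_le.mp (abs_dotp_sub_le_of_lpnorm_sub_le hpq w hx')]
  · intro hx
    obtain ⟨x', hx', hwx'⟩ :=
      exists_lpnorm_sub_le_and_dotp_eq hpq w x (t := -ε) (by rwa [abs_neg, abs_of_nonneg])
    exact ⟨x', hx', by linarith⟩

lemma exists_lpnorm_sub_le_and_dotp_nonneg_iff (hpq : p.HolderConjugate q) (hε : 0 ≤ ε)
    (w x : Fin d → ℝ) :
    (∃ x', lpnorm p (x' - x) ≤ ε ∧ 0 ≤ dotp w x') ↔ -(ε * lpnorm q w) ≤ dotp w x := by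
  constructor
  · rintro ⟨x', hx', hnonneg⟩
    linarith [abs_le.mp (abs_dotp_sub_le_of_lpnorm_sub_le hpq w hx')]
  · intro hx
    obtain ⟨x', hx', hwx'⟩ :=
      exists_lpnorm_sub_le_and_dotp_eq hpq w x (t := ε) (by rwa [abs_of_nonneg])
    exact ⟨x', hx', by linarith⟩

lemma preimage_adversarialSet_one (hpq : p.HolderConjugate q) (hε : 0 ≤ ε) (w : Fin d → ℝ) :
    (·, (1 : ℝ)) ⁻¹' adversarialSet p ε w = dotp w ⁻¹' Iio (ε * lpnorm q w) := by
  ext x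
  simp only [adversarialSet, Set.mem_preimage, Set.mem_ofPred_eq, sg_ne_one_iff, Set.mem_Iio]
  exact exists_lpnorm_sub_le_and_dotp_neg_iff hpq hε w x

lemma preimage_adversarialSet_neg_one (hpq : p.HolderConjugate q) (hε : 0 ≤ ε)
    (w : Fin d → ℝ) :
    (·, (-1 : ℝ)) ⁻¹' adversarialSet p ε w = dotp w ⁻¹' Ici (-(ε * lpnorm q w)) := by
  ext x
  simp only [adversarialSet, Set.mem_preimage, Set.mem_ofPred_eq, sg_ne_neg_one_iff, Set.mem_Ici]
  exact exists_lpnorm_sub_le_and_dotp_nonneg_iff hpq hε w x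

end Adversary

lemma gaussianReal_Iic_standardize (m c : ℝ) {v : ℝ} (hv : 0 < v) :
    gaussianReal m v.toNNReal (Iic c) = gaussianReal 0 1 (Iic ((c - m) / √v)) := by
  have hσ : 0 < √v := Real.sqrt_pos.mpr hv
  have hstd : (gaussianReal m v.toNNReal).map (fun x => (x - m) / √v) = gaussianReal 0 1 := by
    rw [← Function.comp_def (· / √v) (· - m), ← Measure.map_map (by fun_prop) (by fun_prop),
      gaussianReal_map_sub_const, gaussianReal_map_div_const, sub_self, zero_div]
    congr
    ext
    simp [Real.sq_sqrt hv.le, hv.le, hv.ne']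
  rw [← hstd, Measure.map_apply (by fun_prop) measurableSet_Iic]
  congr 1
  ext x
  simp [div_le_div_iff_of_pos_right hσ]

lemma gaussianReal_Iio_eq_Iic (m c : ℝ) {v : NNReal} (hv : v ≠ 0) :
    gaussianReal m v (Iio c) = gaussianReal m v (Iic c) :=
  have := nullSingletonClass_gaussianReal (μ := m) hv
  measure_congr Iio_ae_eq_Iic

lemma gaussianReal_neg_Ici_neg (m c : ℝ) (v : NNReal) :
    gaussianReal (-m) v (Ici (-c)) = gaussianReal m v (Iic c) := by
  rw [← gaussianReal_map_neg, Measure.map_apply measurable_neg measurableSet_Ici]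
  congr 1
  ext x
  simp

lemma mixture_apply {d : ℕ} (νpos νneg : Measure (Fin d → ℝ)) (s : Set ((Fin d → ℝ) × ℝ)) :
    mixture νpos νneg s
      = 2⁻¹ * νpos ((·, (1 : ℝ)) ⁻¹' s) + 2⁻¹ * νneg ((·, (-1 : ℝ)) ⁻¹' s) := by
  simp only [mixture, Measure.add_apply, Measure.smul_apply, smul_eq_mul,
    (measurableEmbedding_prod_mk_right _).map_apply]

lemma IsGaussianVec.measure_dotp_preimage {d : ℕ} {θ : Fin d → ℝ}
    {S : Matrix (Fin d) (Fin d) ℝ} {ν : Measure (Fin d → ℝ)} (h : IsGaussianVec θ S ν)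
    (w : Fin d → ℝ) {s : Set ℝ} (hs : MeasurableSet s) :
    ν (dotp w ⁻¹' s) = gaussianReal (dotp w θ) (dotp w (S.mulVec w)).toNNReal s := by
  rw [← h w, Measure.map_apply (measurable_dotp w) hs]

theorem gaussian_mixture_advRisk_general {d : ℕ} (θ : Fin d → ℝ) (S : Matrix (Fin d) (Fin d) ℝ)
    (νpos νneg : Measure (Fin d → ℝ))
    (hpos : IsGaussianVec θ S νpos) (hneg : IsGaussianVec (fun i => -θ i) S νneg)
    (w : Fin d → ℝ) (hS : 0 < dotp w (S.mulVec w))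
    (p q : ℝ) (hp : 1 ≤ p) (hq : 1 ≤ q) (hpq : 1 / p + 1 / q = 1)
    (ε : ℝ) (hε : 0 ≤ ε) :
    mixture νpos νneg
        {t | ∃ x', lpnorm p (fun i => x' i - t.1 i) ≤ ε ∧ sg (dotp w x') ≠ t.2}
      = gaussianReal 0 1
          {z | z ≤ (ε * lpnorm q w - dotp w θ) / Real.sqrt (dotp w (S.mulVec w))} := by
  have hpq' : p.HolderConjugate q :=
    ⟨by simpa only [one_div, inv_one] using hpq, by linarith, by linarith⟩
  have hmean_neg : dotp w (fun i => -θ i) = -dotp w θ := dotProduct_neg w θ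
  show mixture νpos νneg (adversarialSet p ε w) = gaussianReal 0 1 (Iic _)
  rw [mixture_apply, preimage_adversarialSet_one hpq' hε, preimage_adversarialSet_neg_one hpq' hε,
    hpos.measure_dotp_preimage w measurableSet_Iio, hneg.measure_dotp_preimage w measurableSet_Ici,
    hmean_neg, gaussianReal_neg_Ici_neg,
    gaussianReal_Iio_eq_Iic _ _ (by simpa using hS), ← add_mul, ENNReal.inv_two_add_inv_two,
    one_mul]
  exact gaussianReal_Iic_standardize _ _ hS

/-- In the Gaussian mixture model with an `ℓ_p`-bounded adversary (conjugate exponents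
`p, q`), the adversarial risk of `f(x) = sgn(wᵀx)` equals
`Pr_{Z∼N(0,1)}[Z ≤ (ε‖w‖_q - wᵀθ*) / √(wᵀΣ*w)]`. -/
theorem gaussian_mixture_advRisk {d : ℕ} (θ : Fin d → ℝ) (S : Matrix (Fin d) (Fin d) ℝ)
    (νpos νneg : Measure (Fin d → ℝ)) [IsProbabilityMeasure νpos] [IsProbabilityMeasure νneg]
    (hpos : IsGaussianVec θ S νpos) (hneg : IsGaussianVec (fun i => -θ i) S νneg)
    (w : Fin d → ℝ) (hw : lpnorm 2 w = 1) (hS : 0 < dotp w (S.mulVec w))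
    (p q : ℝ) (hp : 1 ≤ p) (hq : 1 ≤ q) (hpq : 1 / p + 1 / q = 1)
    (ε : ℝ) (hε : 0 ≤ ε) :
    mixture νpos νneg
        {t | ∃ x', lpnorm p (fun i => x' i - t.1 i) ≤ ε ∧ sg (dotp w x') ≠ t.2}
      = gaussianReal 0 1
          {z | z ≤ (ε * lpnorm q w - dotp w θ) / Real.sqrt (dotp w (S.mulVec w))} :=
  gaussian_mixture_advRisk_general θ S νpos νneg hpos hneg w hS p q hp hq hpq ε hε
end
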